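/- With the setup of the previous statement (ρ: G → GL(V), x in the standard apartment): gl(V̂)_{ρ_*(x),r} ∩ ρ(ĝ) = ρ(ĝ_{x,r}) for all r ∈ ℝ, where ĝ_{x,r} and gl(V̂)_{ρ_*(x),r} denote the respective Moy-Prasad filtrations on ĝ = g ⊗ F and gl(V) ⊗ F. -/

import Mathlib

open HahnSeries

variable {k g E : Type*} [Field k] [Algebra ℝ k]
  [AddCommGroup g] [Module k g] [AddCommGroup E] [Module k E]

/-- The map `ĝ = g ⊗ F → E ⊗ F` induced coefficientwise by a linear map `ρ : g → E`,
where `M ⊗ F` is modelled by Laurent series with coefficients in `M`. -/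
noncomputable def coeffMap (ρ : g →ₗ[k] E) (f : HahnSeries ℤ g) : HahnSeries ℤ E :=
  { coeff := fun m => ρ (f.coeff m)
    isPWO_support' := f.isPWO_support'.mono (fun m hm => by
      simp only [Function.mem_support, ne_eq] at hm ⊢
      intro h
      exact hm (by rw [h, map_zero])) }

/-- The Moy–Prasad filtration step determined by an eigenspace decomposition
`P : ι → Submodule k M` of `M` for the operator `τ + ad(x̃)`, with eigenvalue
labels `e : ι → ℝ`: the coefficient of `z^m` lies in the sum of the pieces with
`e i + m ≥ r`. -/
def eigFilt {M : Type*} [AddCommGroup M] [Module k M] {ι : Type*}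
    (P : ι → Submodule k M) (e : ι → ℝ) (r : ℝ) : Set (HahnSeries ℤ M) :=
  {f | ∀ m : ℤ, f.coeff m ∈ ⨆ i ∈ {i : ι | r ≤ e i + m}, P i}

/-! Both filtrations are spectral: the coefficient of `z^m` in the `r`-th step ranges over the sum
of the eigenspaces of the grading operator for the eigenvalues `≥ r - m`. An intertwiner maps
eigenspaces into eigenspaces for the same eigenvalue, which gives `⊇`. Conversely, if `ρ f` lies in
the filtration, project each coefficient of `f` onto the eigenvalues `≥ r - m` along the others:
the discarded part is sent by `ρ` to eigenvalues `< r - m`, and also to eigenvalues `≥ r - m`, so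
to zero by independence of eigenspaces. Hence `ρ` of the projected series is still `ρ f`. -/

namespace Module.End

variable {R M N : Type*} [CommRing R] [AddCommGroup M] [Module R M] [AddCommGroup N] [Module R N]

theorem disjoint_iSup_eigenspace [IsDomain R] [IsTorsionFree R M] (A : End R M) {S T : Set R}
    (hST : Disjoint S T) :
    Disjoint (⨆ μ ∈ S, A.eigenspace μ) (⨆ μ ∈ T, A.eigenspace μ) :=
  A.eigenspaces_iSupIndep.disjoint_biSup_biSup hST

theorem isCompl_iSup_eigenspace_compl [IsDomain R] [IsTorsionFree R M] {A : End R M}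
    (hA : ⨆ μ, A.eigenspace μ = ⊤) (S : Set R) :
    IsCompl (⨆ μ ∈ S, A.eigenspace μ) (⨆ μ ∈ Sᶜ, A.eigenspace μ) :=
  ⟨A.disjoint_iSup_eigenspace disjoint_compl_right,
    codisjoint_iff.2 <| (iSup_split _ (· ∈ S)).symm.trans hA⟩

theorem iSup_eigenspace_eq_top_of_le {ι : Type*} {A : End R M} {P : ι → Submodule R M}
    {e : ι → R} (hP : ∀ i, P i ≤ A.eigenspace (e i)) (htop : ⨆ i, P i = ⊤) :
    ⨆ μ, A.eigenspace μ = ⊤ :=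
  top_unique <| htop ▸ iSup_mono' fun i => ⟨e i, hP i⟩

theorem iSup_preimage_eq_iSup_eigenspace [IsDomain R] [IsTorsionFree R M] {ι : Type*}
    {A : End R M} {P : ι → Submodule R M} {e : ι → R} (hP : ∀ i, P i ≤ A.eigenspace (e i))
    (htop : ⨆ i, P i = ⊤) (S : Set R) :
    ⨆ i ∈ e ⁻¹' S, P i = ⨆ μ ∈ S, A.eigenspace μ := by
  have hle : ∀ T : Set R, ⨆ i ∈ e ⁻¹' T, P i ≤ ⨆ μ ∈ T, A.eigenspace μ := fun T =>
    iSup₂_le fun i hi => (hP i).trans (le_biSup A.eigenspace hi)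
  -- modular law against the complementary sum `⨆ i ∈ e ⁻¹' Sᶜ, P i`
  refine eq_of_le_of_inf_le_of_sup_le (hle S) (z := ⨆ i ∈ e ⁻¹' Sᶜ, P i) ?_ ?_
  · calc (⨆ μ ∈ S, A.eigenspace μ) ⊓ ⨆ i ∈ e ⁻¹' Sᶜ, P i
        ≤ (⨆ μ ∈ S, A.eigenspace μ) ⊓ ⨆ μ ∈ Sᶜ, A.eigenspace μ := inf_le_inf_left _ (hle Sᶜ)
      _ = ⊥ := (A.disjoint_iSup_eigenspace disjoint_compl_right).eq_bot
      _ ≤ _ := bot_le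
  · exact le_top.trans_eq (htop.symm.trans (iSup_split P (e · ∈ S)))

theorem map_eigenspace_le_of_comp_eq {A : End R M} {B : End R N} {ρ : M →ₗ[R] N}
    (h : B ∘ₗ ρ = ρ ∘ₗ A) (μ : R) : (A.eigenspace μ).map ρ ≤ B.eigenspace μ := by
  rintro _ ⟨v, hv, rfl⟩
  rw [SetLike.mem_coe, mem_eigenspace_iff] at hv
  rw [mem_eigenspace_iff, ← LinearMap.comp_apply, h, LinearMap.comp_apply, hv, map_smul]

theorem map_iSup_eigenspace_le_of_comp_eq {A : End R M} {B : End R N} {ρ : M →ₗ[R] N}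
    (h : B ∘ₗ ρ = ρ ∘ₗ A) (S : Set R) :
    (⨆ μ ∈ S, A.eigenspace μ).map ρ ≤ ⨆ μ ∈ S, B.eigenspace μ := by
  simp only [Submodule.map_iSup]
  exact iSup₂_mono fun μ _ => map_eigenspace_le_of_comp_eq h μ

theorem map_projection_iSup_eigenspace [IsDomain R] [IsTorsionFree R M] [IsTorsionFree R N]
    {A : End R M} {B : End R N} {ρ : M →ₗ[R] N} (h : B ∘ₗ ρ = ρ ∘ₗ A)
    (hA : ⨆ μ, A.eigenspace μ = ⊤) {S : Set R} {v : M}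
    (hv : ρ v ∈ ⨆ μ ∈ S, B.eigenspace μ) :
    ρ (Submodule.projection _ _ (isCompl_iSup_eigenspace_compl hA S) v) = ρ v := by
  set hS := isCompl_iSup_eigenspace_compl hA S
  have hcompl : ρ (v - Submodule.projection _ _ hS v) ∈ ⨆ μ ∈ Sᶜ, B.eigenspace μ :=
    map_iSup_eigenspace_le_of_comp_eq h Sᶜ
      (Submodule.mem_map_of_mem (Submodule.sub_projection_mem hS v))
  have hmem : ρ (v - Submodule.projection _ _ hS v) ∈ ⨆ μ ∈ S, B.eigenspace μ :=
    map_sub ρ _ _ ▸ sub_mem hv (map_iSup_eigenspace_le_of_comp_eq h S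
      (Submodule.mem_map_of_mem (Submodule.projection_apply_mem hS v)))
  have := Submodule.disjoint_def.1 (B.disjoint_iSup_eigenspace disjoint_compl_right) _ hmem hcompl
  rwa [map_sub, sub_eq_zero, eq_comm] at this

end Module.End

theorem HahnSeries.exists_coeff_eq_of_support_subset {Γ M N : Type*} [PartialOrder Γ] [Zero M]
    [Zero N] (f : HahnSeries Γ M) {c : Γ → N} (hc : Function.support c ⊆ f.support) :
    ∃ f' : HahnSeries Γ N, f'.coeff = c :=
  ⟨⟨c, f.isPWO_support.mono hc⟩, rfl⟩

open Module End

theorem mem_eigFilt_iff {M ι : Type*} [AddCommGroup M] [Module k M] {P : ι → Submodule k M}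
    {e : ι → ℝ} {A : End k M} (hA : ∀ i, ∀ v ∈ P i, A v = algebraMap ℝ k (e i) • v)
    (htop : ⨆ i, P i = ⊤) (r : ℝ) (f : HahnSeries ℤ M) :
    f ∈ eigFilt P e r ↔
      ∀ m : ℤ, f.coeff m ∈ ⨆ μ ∈ algebraMap ℝ k '' Set.Ici (r - m), A.eigenspace μ := by
  have hP : ∀ i, P i ≤ A.eigenspace (algebraMap ℝ k (e i)) := fun i v hv =>
    mem_eigenspace_iff.2 (hA i v hv)
  have hpre : ∀ m : ℤ, {i | r ≤ e i + m} =
      (fun i => algebraMap ℝ k (e i)) ⁻¹' (algebraMap ℝ k '' Set.Ici (r - m)) := by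
    intro m
    ext i
    simp [(algebraMap ℝ k).injective.mem_set_image]
  simp only [eigFilt, Set.mem_ofPred_eq, hpre, iSup_preimage_eq_iSup_eigenspace hP htop]

theorem exists_coeffMap_eq_of_coeff_mem {K V W : Type*} [Field K] [AddCommGroup V] [Module K V]
    [AddCommGroup W] [Module K W] {A : End K V} {B : End K W} {ρ : V →ₗ[K] W}
    (hcomm : B ∘ₗ ρ = ρ ∘ₗ A) (hdiag : ⨆ μ, A.eigenspace μ = ⊤) (S : ℤ → Set K)
    (f : HahnSeries ℤ V) (hf : ∀ m, ρ (f.coeff m) ∈ ⨆ μ ∈ S m, B.eigenspace μ) :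
    ∃ f' : HahnSeries ℤ V,
      (∀ m, f'.coeff m ∈ ⨆ μ ∈ S m, A.eigenspace μ) ∧ coeffMap ρ f' = coeffMap ρ f := by
  let π m := Submodule.projection _ _ (isCompl_iSup_eigenspace_compl hdiag (S m))
  obtain ⟨f', hf'⟩ := f.exists_coeff_eq_of_support_subset (c := fun m => π m (f.coeff m))
    fun m hm h => hm (by simp only [h, map_zero])
  refine ⟨f', fun m => hf' ▸ Submodule.projection_apply_mem _ _, ?_⟩
  ext m
  show ρ (f'.coeff m) = ρ (f.coeff m)
  rw [hf']
  exact map_projection_iSup_eigenspace hcomm hdiag (hf m)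

/-- `gP`, `EP` are the eigenspace decompositions of the grading operators `Ag = τ + ad(x̃)` on `g`
and `AE = τ + ad(dρ(x̃))` on `E = gl(V)`. -/
theorem stmt11_general {ι κ : Type*} [DecidableEq ι] [DecidableEq κ]
    (gP : ι → Submodule k g) (EP : κ → Submodule k E)
    (eG : ι → ℝ) (eE : κ → ℝ)
    (hg : DirectSum.IsInternal gP) (hE : DirectSum.IsInternal EP)
    (Ag : g →ₗ[k] g) (AE : E →ₗ[k] E)
    (hAg : ∀ i, ∀ v ∈ gP i, Ag v = (algebraMap ℝ k (eG i)) • v)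
    (hAE : ∀ j, ∀ w ∈ EP j, AE w = (algebraMap ℝ k (eE j)) • w)
    (ρ : g →ₗ[k] E)
    (hcomm : AE ∘ₗ ρ = ρ ∘ₗ Ag)
    (r : ℝ) (Φ : HahnSeries ℤ E) :
    (Φ ∈ eigFilt EP eE r ∧ ∃ f : HahnSeries ℤ g, coeffMap ρ f = Φ)
    ↔ (∃ f ∈ eigFilt gP eG r, coeffMap ρ f = Φ) := by
  have hdiag := iSup_eigenspace_eq_top_of_le (A := Ag)
    (fun i v hv => mem_eigenspace_iff.2 (hAg i v hv)) hg.submodule_iSup_eq_top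
  simp only [mem_eigFilt_iff hAg hg.submodule_iSup_eq_top,
    mem_eigFilt_iff hAE hE.submodule_iSup_eq_top]
  constructor
  · rintro ⟨hΦ, f, rfl⟩
    exact exists_coeffMap_eq_of_coeff_mem hcomm hdiag _ f hΦ
  · rintro ⟨f, hf, rfl⟩
    exact ⟨fun m => map_iSup_eigenspace_le_of_comp_eq hcomm _ (Submodule.mem_map_of_mem (hf m)),
      f, rfl⟩

/-- With `ρ : G → GL(V)` a representation and `x` in the standard
apartment: `gl(V̂)_{ρ_*(x),r} ∩ ρ(ĝ) = ρ(ĝ_{x,r})` for all `r ∈ ℝ`.  Here `g` carries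
the eigenspace decomposition `gP` of `τ + ad(x̃)` (eigenvalues `eG`), `E = gl(V)`
carries the eigenspace decomposition `EP` of `τ + ad(dρ(x̃))` (eigenvalues `eE`),
`ρ` is injective and intertwines the two grading operators `Ag`, `AE`. -/
theorem stmt11 {ι κ : Type*} [Fintype ι] [Fintype κ] [DecidableEq ι] [DecidableEq κ]
    (gP : ι → Submodule k g) (EP : κ → Submodule k E)
    (eG : ι → ℝ) (eE : κ → ℝ)
    (hg : DirectSum.IsInternal gP) (hE : DirectSum.IsInternal EP)
    (Ag : g →ₗ[k] g) (AE : E →ₗ[k] E)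
    (hAg : ∀ i, ∀ v ∈ gP i, Ag v = (algebraMap ℝ k (eG i)) • v)
    (hAE : ∀ j, ∀ w ∈ EP j, AE w = (algebraMap ℝ k (eE j)) • w)
    (ρ : g →ₗ[k] E) (hinj : Function.Injective ρ)
    (hcomm : AE ∘ₗ ρ = ρ ∘ₗ Ag)
    (r : ℝ) (Φ : HahnSeries ℤ E) :
    (Φ ∈ eigFilt EP eE r ∧ ∃ f : HahnSeries ℤ g, coeffMap ρ f = Φ)
    ↔ (∃ f ∈ eigFilt gP eG r, coeffMap ρ f = Φ) :=
  stmt11_general gP EP eG eE hg hE Ag AE hAg hAE ρ hcomm r Φ
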